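/- The global function f_S of the sand automaton S is surjective on all configurations, F-surjective (every finite configuration has a finite preimage), and P-surjective (every periodic configuration has a periodic preimage). -/

import Mathlib

/-! `f_S` is a sandpile rule: a grain slides from cell `i - 1` to cell `i` exactly when
`c (i - 1) ≥ c i + 2` (with `±∞` compared in the obvious way), so
`f_S c i = c i + flow c i - flow c (i + 1)`. Undoing every flow,
`c' i = c i - flow c i + flow c (i + 1)`, gives a preimage: across the edge `(i - 1, i)` the
correction changes `c (i - 1) - c i` by `2 flow c i - flow c (i - 1) - flow c (i + 1)`, which is
`≥ 0` on a steep edge and `≤ 0` on a flat one, so `c'` has the same flows as `c`. As `c'` is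
computed locally from `c`, it is finite or periodic whenever `c` is. -/

/-- The extended integers `ℤ ∪ {-∞, +∞}`. -/
abbrev EZ : Type := WithBot (WithTop ℤ)

/-- Embedding of `ℤ` into the extended integers. -/
def finVal (n : ℤ) : EZ := ((n : WithTop ℤ) : EZ)

/-- The integer value of a finite extended integer (`0` on `±∞`). -/
def valZ (x : EZ) : ℤ := WithBot.recBotCoe 0 (fun y => WithTop.recTopCoe 0 id y) x

/-- The measuring device `β_l^m`. -/
noncomputable def beta (l : ℕ) (m : ℤ) (n : EZ) : EZ :=
  if finVal (m + (l : ℤ)) < n then ⊤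
  else if n < finVal (m - (l : ℤ)) then ⊥
  else WithBot.map (WithTop.map (fun k => k - m)) n

/-- Reference height: the value of `x` if finite, `0` if `x = ±∞`. -/
def refH (x : EZ) : ℤ := if x = ⊥ ∨ x = ⊤ then 0 else valZ x

/-- One-dimensional sandpile configurations. -/
abbrev Config : Type := ℤ → EZ

/-- The neighborhood sequence `d_r^i(c)`: the `2r`-tuple of measured differences. -/
noncomputable def nbhd (r : ℕ) (c : Config) (i : ℤ) : Fin (2 * r) → EZ :=
  fun j => beta r (refH (c i))
    (c (i + (if (j : ℕ) < r then ((j : ℕ) : ℤ) - (r : ℤ) else ((j : ℕ) : ℤ) - (r : ℤ) + 1)))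

/-- The global function of the sand automaton of radius `r` with local rule `lam`. -/
noncomputable def globalF (r : ℕ) (lam : (Fin (2 * r) → EZ) → ℤ) (c : Config) : Config :=
  fun i => if c i = ⊥ ∨ c i = ⊤ then c i
    else finVal (valZ (c i) + lam (nbhd r c i))

/-- Finite configurations. -/
def FiniteConf (c : Config) : Prop := ∃ k : ℕ, ∀ i : ℤ, (k : ℤ) ≤ |i| → c i = finVal 0

/-- Periodic configurations. -/
def PeriodicConf (c : Config) : Prop := ∃ p : ℤ, p ≠ 0 ∧ ∀ i : ℤ, c (i + p) = c i


/-- The local rule of the sand automaton `S`: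
`λ_S(x,y) = +1` if `x = +∞ ∧ y ≠ -∞`, `-1` if `x ≠ +∞ ∧ y = -∞`, `0` otherwise. -/
def lamS (v : Fin 2 → EZ) : ℤ :=
  if v 0 = ⊤ ∧ v 1 ≠ ⊥ then 1
  else if v 0 ≠ ⊤ ∧ v 1 = ⊥ then -1
  else 0

lemma finVal_add (a b : ℤ) : finVal (a + b) = finVal a + finVal b := by simp [finVal]

lemma finVal_zero : finVal 0 = 0 := rfl

lemma finVal_lt_finVal {a b : ℤ} : finVal a < finVal b ↔ a < b := by simp [finVal]

lemma finVal_le_finVal {a b : ℤ} : finVal a ≤ finVal b ↔ a ≤ b := by simp [finVal]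

lemma finVal_lt_top (a : ℤ) : finVal a < ⊤ := WithBot.coe_lt_coe.2 (WithTop.coe_lt_top a)

lemma bot_lt_finVal (a : ℤ) : ⊥ < finVal a := WithBot.bot_lt_coe _

lemma top_add_finVal (a : ℤ) : (⊤ : EZ) + finVal a = ⊤ := rfl

lemma bot_add_finVal (a : ℤ) : (⊥ : EZ) + finVal a = ⊥ := rfl

lemma refH_finVal (a : ℤ) : refH (finVal a) = a := by simp [refH, finVal, valZ]

lemma valZ_finVal (a : ℤ) : valZ (finVal a) = a := rfl

lemma EZ.cases (x : EZ) : x = ⊥ ∨ x = ⊤ ∨ ∃ a, x = finVal a := by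
  induction x using WithBot.recBotCoe with
  | bot => exact .inl rfl
  | coe x => induction x using WithTop.recTopCoe with
    | top => exact .inr (.inl rfl)
    | coe a => exact .inr (.inr ⟨a, rfl⟩)

lemma one_eq_finVal : (1 : EZ) = finVal 1 := rfl

lemma add_one_lt_finVal_iff (x : EZ) (a : ℤ) : x + 1 < finVal a ↔ x < finVal (a - 1) := by
  obtain rfl | rfl | ⟨b, rfl⟩ := EZ.cases x
  · simp [bot_lt_finVal]
  · simp [one_eq_finVal, top_add_finVal]
  · rw [one_eq_finVal, ← finVal_add, finVal_lt_finVal, finVal_lt_finVal]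
    omega

lemma add_finVal_add_one_lt_iff {x y : EZ} {a b : ℤ} (h₁ : y + 1 < x → b ≤ a)
    (h₂ : ¬y + 1 < x → a ≤ b) : y + finVal b + 1 < x + finVal a ↔ y + 1 < x := by
  obtain rfl | rfl | ⟨s, rfl⟩ := EZ.cases x <;>
    obtain rfl | rfl | ⟨t, rfl⟩ := EZ.cases y <;>
    simp only [one_eq_finVal, top_add_finVal, bot_add_finVal, ← finVal_add, finVal_lt_finVal,
      lt_self_iff_false, not_top_lt, bot_lt_finVal, finVal_lt_top, not_lt_bot] at *
  omega

lemma beta_eq_top_iff (l : ℕ) (m : ℤ) (x : EZ) : beta l m x = ⊤ ↔ finVal (m + l) < x := by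
  unfold beta
  split_ifs with h₁
  · simp [h₁]
  · simp [h₁]
  · simp only [h₁, iff_false]
    obtain rfl | rfl | ⟨a, rfl⟩ := EZ.cases x
    · simp
    · exact absurd (finVal_lt_top _) h₁
    · simp [finVal]

lemma beta_eq_bot_iff (l : ℕ) (m : ℤ) (x : EZ) : beta l m x = ⊥ ↔ x < finVal (m - l) := by
  unfold beta
  split_ifs with h₁ h₂
  · simp only [top_ne_bot, false_iff, not_lt]
    exact le_trans (finVal_le_finVal.2 (by omega)) h₁.le
  · simp [h₂]
  · simp only [h₂, iff_false]
    obtain rfl | rfl | ⟨a, rfl⟩ := EZ.cases x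
    · exact absurd (bot_lt_finVal _) h₂
    · simp
    · simp [finVal]

lemma lamS_eq (v : Fin 2 → EZ) :
    lamS v = (if v 0 = ⊤ then 1 else 0) - (if v 1 = ⊥ then 1 else 0) := by
  unfold lamS
  split_ifs <;> simp_all

noncomputable def flow (c : Config) (i : ℤ) : ℤ := if c i + 1 < c (i - 1) then 1 else 0

lemma flow_nonneg (c : Config) (i : ℤ) : 0 ≤ flow c i := by unfold flow; split_ifs <;> omega

lemma flow_le_one (c : Config) (i : ℤ) : flow c i ≤ 1 := by unfold flow; split_ifs <;> omega

lemma lamS_nbhd_of_eq_finVal {c : Config} {i m : ℤ} (h : c i = finVal m) :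
    lamS (nbhd 1 c i) = flow c i - flow c (i + 1) := by
  have left : nbhd 1 c i 0 = beta 1 m (c (i - 1)) := by
    simp [nbhd, h, refH_finVal, sub_eq_add_neg]
  have right : nbhd 1 c i 1 = beta 1 m (c (i + 1)) := by simp [nbhd, h, refH_finVal]
  simp only [lamS_eq, left, right, beta_eq_top_iff, beta_eq_bot_iff, flow, add_sub_cancel_right,
    h, Nat.cast_one, ← add_one_lt_finVal_iff, finVal_add, one_eq_finVal]

lemma globalF_lamS_apply (c : Config) (i : ℤ) :
    globalF 1 lamS c i = c i + finVal (flow c i - flow c (i + 1)) := by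
  unfold globalF
  obtain h | h | ⟨m, h⟩ := EZ.cases (c i)
  · simp [h]
  · simp [h, top_add_finVal]
  · have hbot : finVal m ≠ ⊥ := (bot_lt_finVal m).ne'
    have htop : finVal m ≠ ⊤ := (finVal_lt_top m).ne
    simp only [h, hbot, htop, or_self, if_false, valZ_finVal, lamS_nbhd_of_eq_finVal h, finVal_add]

noncomputable def preimageS (c : Config) (i : ℤ) : EZ := c i + finVal (flow c (i + 1) - flow c i)

lemma flow_preimageS (c : Config) (i : ℤ) : flow (preimageS c) i = flow c i := by
  have steep_iff : preimageS c i + 1 < preimageS c (i - 1) ↔ c i + 1 < c (i - 1) := by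
    simp only [preimageS, sub_add_cancel]
    have := flow_nonneg c (i - 1); have := flow_le_one c (i - 1)
    have := flow_nonneg c (i + 1); have := flow_le_one c (i + 1)
    apply add_finVal_add_one_lt_iff
    · intro h
      have : flow c i = 1 := if_pos h
      omega
    · intro h
      have : flow c i = 0 := if_neg h
      omega
  simp only [flow, steep_iff]

theorem globalF_lamS_preimageS (c : Config) : globalF 1 lamS (preimageS c) = c := by
  funext i
  rw [globalF_lamS_apply, flow_preimageS, flow_preimageS, preimageS, add_assoc, ← finVal_add]
  simp [finVal_zero]

lemma flow_eq_zero_of_eq {c : Config} {i : ℤ} (h : c (i - 1) = c i) : flow c i = 0 := by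
  have : ¬c i + 1 < c i := by
    obtain h | h | ⟨m, h⟩ := EZ.cases (c i) <;>
      simp [h, one_eq_finVal, top_add_finVal, ← finVal_add, finVal_lt_finVal]
  simp [flow, h, this]

lemma preimageS_finite {c : Config} (hc : FiniteConf c) : FiniteConf (preimageS c) := by
  obtain ⟨k, hk⟩ := hc
  refine ⟨k + 1, fun i hi => ?_⟩
  have zero_at : ∀ j, |j - i| ≤ 1 → c j = finVal 0 := fun j hj => hk j (by
    rw [abs_le] at hj; rw [le_abs] at hi ⊢; push_cast at hi; omega)
  have h₀ := zero_at i (by simp)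
  rw [preimageS, flow_eq_zero_of_eq, flow_eq_zero_of_eq, h₀]
  · simp [finVal_zero]
  · rw [h₀, zero_at (i - 1) (by norm_num [abs_le])]
  · rw [add_sub_cancel_right, h₀, zero_at (i + 1) (by norm_num)]

lemma preimageS_periodic {c : Config} (hc : PeriodicConf c) : PeriodicConf (preimageS c) := by
  obtain ⟨p, hp, hper⟩ := hc
  have flow_per : ∀ i, flow c (i + p) = flow c i := fun i => by
    simp only [flow, hper, show i + p - 1 = i - 1 + p by ring]
  refine ⟨p, hp, fun i => ?_⟩
  simp only [preimageS, hper, flow_per, show i + p + 1 = i + 1 + p by ring]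

/-- `f_S` is surjective, `F`-surjective (every finite configuration has a finite
preimage) and `P`-surjective (every periodic configuration has a periodic preimage). -/
theorem S_surjective :
    Function.Surjective (globalF 1 lamS) ∧
    (∀ c : Config, FiniteConf c → ∃ c', FiniteConf c' ∧ globalF 1 lamS c' = c) ∧
    (∀ c : Config, PeriodicConf c → ∃ c', PeriodicConf c' ∧ globalF 1 lamS c' = c) :=
  ⟨fun c => ⟨preimageS c, globalF_lamS_preimageS c⟩,
    fun _ hc => ⟨_, preimageS_finite hc, globalF_lamS_preimageS _⟩,
    fun _ hc => ⟨_, preimageS_periodic hc, globalF_lamS_preimageS _⟩⟩
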